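/- arXiv:1507.01202 — 5 statements merged into one kernel-verified Lean document; each statement's English description precedes it below -/
import Mathlib

section
/- Let (A,U,B,V) be a general linear method satisfying the (L,P)-symmetry condition (A = P(UV⁻¹B−A)P, U = PUV⁻¹L, B = LV⁻¹BP, V = LV⁻¹L with L² = I, P² = I). Then for every diagonal s×s complex matrix Z such that both I − AZ and I + AP Z P are invertible (and V invertible), the linear stability matrix M(Z) := V + BZ(I − AZ)⁻¹U satisfies L·M(−PZP)·L·M(Z) = I. -/
/-!
The symmetry conditions give `PAP = UV⁻¹B − A`, hence `I + A·PZP = P (I − AZ + UV⁻¹BZ) P`, and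
conjugating by `L` turns `M(−PZP)` into `V⁻¹ − V⁻¹BZ (I − AZ + UV⁻¹BZ)⁻¹ UV⁻¹`. Writing
`M(Z) = V + (BZ)(I − AZ)⁻¹U`, the Woodbury identity identifies this matrix with `M(Z)⁻¹`.
-/

open Matrix

theorem isUnit_conj_iff_of_mul_self_eq_one {M : Type*} [Monoid M] {p : M} (hp : p * p = 1)
    (k : M) : IsUnit (p * k * p) ↔ IsUnit k :=
  let u : Mˣ := ⟨p, p, hp, hp⟩
  (u.isUnit_mul_units _).trans (u.isUnit_units_mul _)

namespace Matrix

variable {m n R : Type*} [Fintype m] [Fintype n] [DecidableEq m] [DecidableEq n] [CommRing R]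

theorem isUnit_add_mul_mul {A : Matrix n n R} {U : Matrix n m R} {C : Matrix m m R}
    {V : Matrix m n R} (hA : IsUnit A) (hC : IsUnit C) (hAC : IsUnit (C⁻¹ + V * A⁻¹ * U)) :
    IsUnit (A + U * C * V) := by
  obtain ⟨_⟩ := hA.nonempty_invertible
  obtain ⟨_⟩ := hC.nonempty_invertible
  obtain ⟨iAC⟩ := hAC.nonempty_invertible
  simp only [← invOf_eq_nonsing_inv] at iAC
  let := invertibleAddMulMul A U C V
  exact isUnit_of_invertible _

theorem inv_conj_of_mul_self_eq_one {P : Matrix n n R} (hP : P * P = 1) (K : Matrix n n R) :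
    (P * K * P)⁻¹ = P * K⁻¹ * P := by
  rw [mul_inv_rev, mul_inv_rev, inv_eq_left_inv hP, Matrix.mul_assoc]

end Matrix

variable {m n R : Type*} [Fintype m] [Fintype n] [DecidableEq m] [DecidableEq n] [CommRing R]

noncomputable def stabilityMatrix (A : Matrix m m R) (U : Matrix m n R) (B : Matrix n m R)
    (V : Matrix n n R) (Z : Matrix m m R) : Matrix n n R :=
  V + B * Z * (1 - A * Z)⁻¹ * U

theorem mul_stabilityMatrix_eq_one {A Z : Matrix m m R} {U : Matrix m n R} {B : Matrix n m R}
    {V : Matrix n n R} (hV : IsUnit V) (hN : IsUnit (1 - A * Z))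
    (hK : IsUnit (1 - A * Z + U * V⁻¹ * B * Z)) :
    (V⁻¹ - V⁻¹ * B * Z * (1 - A * Z + U * V⁻¹ * B * Z)⁻¹ * U * V⁻¹) *
      stabilityMatrix A U B V Z = 1 := by
  have hN' : (1 - A * Z)⁻¹⁻¹ = 1 - A * Z :=
    nonsing_inv_nonsing_inv _ ((isUnit_iff_isUnit_det _).mp hN)
  have hK_eq : (1 - A * Z)⁻¹⁻¹ + U * V⁻¹ * (B * Z) = 1 - A * Z + U * V⁻¹ * B * Z := by
    rw [hN', Matrix.mul_assoc (U * V⁻¹)]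
  have hC : IsUnit (1 - A * Z)⁻¹ := isUnit_nonsing_inv_iff.mpr hN
  have hK' : IsUnit ((1 - A * Z)⁻¹⁻¹ + U * V⁻¹ * (B * Z)) := hK_eq ▸ hK
  have hM := isUnit_add_mul_mul hV hC hK'
  unfold stabilityMatrix
  rw [← nonsing_inv_mul _ ((isUnit_iff_isUnit_det _).mp hM),
    add_mul_mul_inv_eq_sub _ _ _ _ hV hC hK', hK_eq]
  simp only [Matrix.mul_assoc]

structure IsLPSymmetric (A : Matrix m m R) (U : Matrix m n R) (B : Matrix n m R)
    (V L : Matrix n n R) (P : Matrix m m R) : Prop where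
  L_mul_L : L * L = 1
  P_mul_P : P * P = 1
  A_eq : A = P * (U * V⁻¹ * B - A) * P
  U_eq : U = P * U * V⁻¹ * L
  B_eq : B = L * V⁻¹ * B * P
  V_eq : V = L * V⁻¹ * L

namespace IsLPSymmetric

variable {A : Matrix m m R} {U : Matrix m n R} {B : Matrix n m R} {V L : Matrix n n R}
  {P : Matrix m m R} (h : IsLPSymmetric A U B V L P)
include h

theorem P_mul_A_mul_P : P * A * P = U * V⁻¹ * B - A := by
  conv_lhs => rw [h.A_eq]
  simp only [← Matrix.mul_assoc, h.P_mul_P, Matrix.one_mul]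
  simp only [Matrix.mul_assoc, h.P_mul_P, Matrix.mul_one]

theorem L_mul_B_mul_P : L * B * P = V⁻¹ * B := by
  conv_lhs => rw [h.B_eq]
  simp only [← Matrix.mul_assoc, h.L_mul_L, Matrix.one_mul]
  simp only [Matrix.mul_assoc, h.P_mul_P, Matrix.mul_one]

theorem U_mul_L : U * L = P * U * V⁻¹ := by
  conv_lhs => rw [h.U_eq]
  simp only [Matrix.mul_assoc, h.L_mul_L, Matrix.mul_one]

theorem L_mul_V_mul_L : L * V * L = V⁻¹ := by
  conv_lhs => rw [h.V_eq]
  simp only [← Matrix.mul_assoc, h.L_mul_L, Matrix.one_mul]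
  simp only [Matrix.mul_assoc, h.L_mul_L, Matrix.mul_one]

theorem one_sub_mul_neg_conj (Z : Matrix m m R) :
    1 - A * -(P * Z * P) = P * (1 - A * Z + U * V⁻¹ * B * Z) * P := by
  have : 1 - A * Z + U * V⁻¹ * B * Z = 1 + P * A * P * Z := by
    rw [h.P_mul_A_mul_P, Matrix.sub_mul]; abel
  rw [this, Matrix.mul_add, Matrix.add_mul, Matrix.mul_one, h.P_mul_P]
  simp only [Matrix.mul_neg, sub_neg_eq_add, ← Matrix.mul_assoc, h.P_mul_P, Matrix.one_mul]

theorem conj_stabilityMatrix_neg_conj (Z : Matrix m m R) :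
    L * stabilityMatrix A U B V (-(P * Z * P)) * L =
      V⁻¹ - V⁻¹ * B * Z * (1 - A * Z + U * V⁻¹ * B * Z)⁻¹ * U * V⁻¹ := by
  set K := 1 - A * Z + U * V⁻¹ * B * Z
  have hPUL : P * (U * L) = U * V⁻¹ := by
    rw [h.U_mul_L, ← Matrix.mul_assoc, ← Matrix.mul_assoc, h.P_mul_P, Matrix.one_mul]
  have hcorr : L * (B * -(P * Z * P) * (P * K⁻¹ * P) * U) * L =
      -(L * B * P * Z * (P * P) * K⁻¹ * (P * (U * L))) := by
    simp only [Matrix.mul_neg, Matrix.neg_mul, Matrix.mul_assoc]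
  rw [stabilityMatrix, h.one_sub_mul_neg_conj, inv_conj_of_mul_self_eq_one h.P_mul_P,
    Matrix.mul_add, Matrix.add_mul, hcorr, h.L_mul_V_mul_L, h.L_mul_B_mul_P, h.P_mul_P, hPUL]
  simp only [Matrix.mul_one, Matrix.mul_assoc, sub_eq_add_neg]

end IsLPSymmetric

theorem symmetric_linear_stability_general {s r : ℕ}
    (A : Matrix (Fin s) (Fin s) ℂ) (U : Matrix (Fin s) (Fin r) ℂ)
    (B : Matrix (Fin r) (Fin s) ℂ) (V : Matrix (Fin r) (Fin r) ℂ)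
    (L : Matrix (Fin r) (Fin r) ℂ) (P : Matrix (Fin s) (Fin s) ℂ)
    (hV : IsUnit V)
    (hL2 : L * L = 1) (hP2 : P * P = 1)
    (h1 : A = P * (U * V⁻¹ * B - A) * P)
    (h2 : U = P * U * V⁻¹ * L)
    (h3 : B = L * V⁻¹ * B * P)
    (h4 : V = L * V⁻¹ * L) :
    ∀ Z : Matrix (Fin s) (Fin s) ℂ, Z.IsDiag →
      IsUnit (1 - A * Z) → IsUnit (1 + A * (P * Z * P)) →
      L * (V + B * (-(P * Z * P)) * (1 - A * (-(P * Z * P)))⁻¹ * U) * L *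
        (V + B * Z * (1 - A * Z)⁻¹ * U) = 1 := by
  intro Z _ hN hN'
  have h : IsLPSymmetric A U B V L P := ⟨hL2, hP2, h1, h2, h3, h4⟩
  have hK : IsUnit (1 - A * Z + U * V⁻¹ * B * Z) := by
    rwa [← isUnit_conj_iff_of_mul_self_eq_one hP2, ← h.one_sub_mul_neg_conj, Matrix.mul_neg,
      sub_neg_eq_add]
  change L * stabilityMatrix A U B V (-(P * Z * P)) * L * stabilityMatrix A U B V Z = 1
  rw [h.conj_stabilityMatrix_neg_conj]
  exact mul_stabilityMatrix_eq_one hV hN hK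

/-- For an (L,P)-symmetric general linear method, the linear stability
matrix `M(Z) := V + BZ(I − AZ)⁻¹U` satisfies `L·M(−PZP)·L·M(Z) = I` for every diagonal
`Z` such that `I − AZ` and `I + A·PZP` are invertible. -/
theorem symmetric_linear_stability {s r : ℕ}
    (A : Matrix (Fin s) (Fin s) ℂ) (U : Matrix (Fin s) (Fin r) ℂ)
    (B : Matrix (Fin r) (Fin s) ℂ) (V : Matrix (Fin r) (Fin r) ℂ)
    (L : Matrix (Fin r) (Fin r) ℂ) (P : Matrix (Fin s) (Fin s) ℂ)
    (hV : IsUnit V)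
    (hP : ∃ σ : Equiv.Perm (Fin s), P = σ.permMatrix ℂ)
    (hL2 : L * L = 1) (hP2 : P * P = 1)
    (h1 : A = P * (U * V⁻¹ * B - A) * P)
    (h2 : U = P * U * V⁻¹ * L)
    (h3 : B = L * V⁻¹ * B * P)
    (h4 : V = L * V⁻¹ * L) :
    ∀ Z : Matrix (Fin s) (Fin s) ℂ, Z.IsDiag →
      IsUnit (1 - A * Z) → IsUnit (1 + A * (P * Z * P)) →
      L * (V + B * (-(P * Z * P)) * (1 - A * (-(P * Z * P)))⁻¹ * U) * L *
        (V + B * Z * (1 - A * Z)⁻¹ * U) = 1 :=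
  symmetric_linear_stability_general A U B V L P hV hL2 hP2 h1 h2 h3 h4
end

section
/- Let (A,U,B,V) be an (L,P)-symmetric general linear method, i.e. A = P(UV⁻¹B−A)P, U = PUV⁻¹L, B = LV⁻¹BP, V = LV⁻¹L, with L² = I, P² = I, and V invertible. Define the transfer function N(ζ) = A + U(ζI − V)⁻¹B for ζ not an eigenvalue of V and ζ ≠ 0. Then N(ζ) = −P·N(ζ⁻¹)·P for all ζ ∈ ℂ with ζ ∉ {0}, ζ not an eigenvalue of V, and ζ⁻¹ not an eigenvalue of V. -/
/-!
Conjugating by `P` and using the symmetry relations turns `P N(ζ⁻¹) P` into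
`U V⁻¹ B - A + U V⁻¹ (L (ζ⁻¹ - V)⁻¹ L) V⁻¹ B`. As `L` is an involution with `L V L = V⁻¹`, the
middle factor is `V⁻¹ (ζ⁻¹ - V⁻¹)⁻¹ V⁻¹ = (ζ⁻¹ V² - V)⁻¹`, and the resolvent identity
`(ζ⁻¹ V² - V)⁻¹ = -((ζ - V)⁻¹ + V⁻¹)` leaves exactly `-N(ζ)`.
-/

open Matrix

namespace Matrix

variable {n K : Type*} [Fintype n] [DecidableEq n]

theorem mul_inv_mul_eq_inv_of_mul_self_eq_one [CommRing K] {L : Matrix n n K} (hL : L * L = 1)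
    (M : Matrix n n K) : L * M⁻¹ * L = (L * M * L)⁻¹ := by
  rw [Matrix.mul_inv_rev, Matrix.mul_inv_rev, inv_eq_left_inv hL, mul_assoc]

theorem inv_mul_inv_smul_one_sub_inv_inv_mul_inv [Field K] {ζ : K} {V : Matrix n n K}
    (hζ : ζ ≠ 0) (hV : IsUnit V) (hW : IsUnit (ζ • 1 - V)) :
    V⁻¹ * (ζ⁻¹ • 1 - V⁻¹)⁻¹ * V⁻¹ = -((ζ • 1 - V)⁻¹ + V⁻¹) := by
  have hV' : IsUnit V.det := (isUnit_iff_isUnit_det V).mp hV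
  have hW' : IsUnit (ζ • 1 - V).det := (isUnit_iff_isUnit_det _).mp hW
  have hcomm : Commute V (ζ • 1 - V) := ((Commute.one_right V).smul_right ζ).sub_right (.refl V)
  have hconj : V * (ζ⁻¹ • 1 - V⁻¹) * V = -ζ⁻¹ • (V * (ζ • 1 - V)) := by
    simp only [mul_sub, sub_mul, Matrix.mul_smul, Matrix.smul_mul, mul_one,
      mul_nonsing_inv _ hV', one_mul, smul_sub]
    match_scalars <;> field_simp
  rw [← Matrix.mul_inv_rev, ← Matrix.mul_inv_rev, ← mul_assoc, hconj]
  refine inv_eq_right_inv ?_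
  rw [smul_mul, mul_neg, mul_add, mul_nonsing_inv_cancel_right _ _ hW', hcomm.eq,
    mul_nonsing_inv_cancel_right _ _ hV', add_sub_cancel, smul_neg, neg_smul, neg_neg, smul_smul,
    inv_mul_cancel₀ hζ, one_smul]

end Matrix

theorem transfer_function_symmetry_general {s r : ℕ}
    (A : Matrix (Fin s) (Fin s) ℂ) (U : Matrix (Fin s) (Fin r) ℂ)
    (B : Matrix (Fin r) (Fin s) ℂ) (V : Matrix (Fin r) (Fin r) ℂ)
    (L : Matrix (Fin r) (Fin r) ℂ) (P : Matrix (Fin s) (Fin s) ℂ)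
    (hV : IsUnit V)
    (hL2 : L * L = 1) (hP2 : P * P = 1)
    (h1 : A = P * (U * V⁻¹ * B - A) * P)
    (h2 : U = P * U * V⁻¹ * L)
    (h3 : B = L * V⁻¹ * B * P)
    (h4 : V = L * V⁻¹ * L) :
    ∀ ζ : ℂ, ζ ≠ 0 → ζ ∉ spectrum ℂ V → ζ⁻¹ ∉ spectrum ℂ V →
      A + U * (ζ • (1 : Matrix (Fin r) (Fin r) ℂ) - V)⁻¹ * B =
        -(P * (A + U * (ζ⁻¹ • (1 : Matrix (Fin r) (Fin r) ℂ) - V)⁻¹ * B) * P) := by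
  intro ζ hζ hζV _
  have hW : IsUnit (ζ • (1 : Matrix (Fin r) (Fin r) ℂ) - V) := by
    simpa only [Algebra.algebraMap_eq_smul_one] using spectrum.notMem_iff.mp hζV
  have hPAP : P * A * P = U * V⁻¹ * B - A := by
    conv_lhs => rw [h1]
    simp only [← Matrix.mul_assoc, hP2, Matrix.one_mul]
    rw [Matrix.mul_assoc, hP2, Matrix.mul_one]
  have hPU : P * U = U * V⁻¹ * L := by
    conv_lhs => rw [h2]
    simp only [← Matrix.mul_assoc, hP2, Matrix.one_mul]
  have hBP : B * P = L * V⁻¹ * B := by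
    conv_lhs => rw [h3]
    rw [Matrix.mul_assoc, hP2, Matrix.mul_one]
  have hLVL : L * V * L = V⁻¹ := by
    conv_lhs => rw [h4]
    simp only [← Matrix.mul_assoc, hL2, Matrix.one_mul]
    rw [Matrix.mul_assoc, hL2, Matrix.mul_one]
  have hLWL : L * (ζ⁻¹ • 1 - V)⁻¹ * L = (ζ⁻¹ • 1 - V⁻¹)⁻¹ := by
    rw [mul_inv_mul_eq_inv_of_mul_self_eq_one hL2, mul_sub, sub_mul, Matrix.mul_smul,
      Matrix.smul_mul, Matrix.mul_one, hL2, hLVL]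
  calc A + U * (ζ • 1 - V)⁻¹ * B
      = -(U * V⁻¹ * B - A + U * -((ζ • 1 - V)⁻¹ + V⁻¹) * B) := by
        rw [Matrix.mul_neg, Matrix.neg_mul, Matrix.mul_add, Matrix.add_mul]; abel
    _ = -(P * A * P + U * (V⁻¹ * (L * (ζ⁻¹ • 1 - V)⁻¹ * L) * V⁻¹) * B) := by
      rw [hPAP, hLWL, inv_mul_inv_smul_one_sub_inv_inv_mul_inv hζ hV hW]
    _ = -(P * A * P + P * U * (ζ⁻¹ • 1 - V)⁻¹ * (B * P)) := by
      rw [hPU, hBP]; simp only [Matrix.mul_assoc]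
    _ = -(P * (A + U * (ζ⁻¹ • 1 - V)⁻¹ * B) * P) := by
      simp only [Matrix.mul_add, Matrix.add_mul, Matrix.mul_assoc]

/-- For an (L,P)-symmetric general linear method, the transfer function
`N(ζ) = A + U(ζI − V)⁻¹B` satisfies `N(ζ) = −P N(ζ⁻¹) P` for all admissible `ζ`. -/
theorem transfer_function_symmetry {s r : ℕ}
    (A : Matrix (Fin s) (Fin s) ℂ) (U : Matrix (Fin s) (Fin r) ℂ)
    (B : Matrix (Fin r) (Fin s) ℂ) (V : Matrix (Fin r) (Fin r) ℂ)
    (L : Matrix (Fin r) (Fin r) ℂ) (P : Matrix (Fin s) (Fin s) ℂ)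
    (hV : IsUnit V)
    (hP : ∃ σ : Equiv.Perm (Fin s), P = σ.permMatrix ℂ)
    (hL2 : L * L = 1) (hP2 : P * P = 1)
    (h1 : A = P * (U * V⁻¹ * B - A) * P)
    (h2 : U = P * U * V⁻¹ * L)
    (h3 : B = L * V⁻¹ * B * P)
    (h4 : V = L * V⁻¹ * L) :
    ∀ ζ : ℂ, ζ ≠ 0 → ζ ∉ spectrum ℂ V → ζ⁻¹ ∉ spectrum ℂ V →
      A + U * (ζ • (1 : Matrix (Fin r) (Fin r) ℂ) - V)⁻¹ * B =
        -(P * (A + U * (ζ⁻¹ • (1 : Matrix (Fin r) (Fin r) ℂ) - V)⁻¹ * B) * P) :=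
  transfer_function_symmetry_general A U B V L P hV hL2 hP2 h1 h2 h3 h4
end

section
/- Let (A,U,B,V) be a general linear method with V invertible and let D be a real invertible diagonal s×s matrix. Suppose there exists a Hermitian matrix G with the G-symplecticity conditions: DA + AᴴD = BᴴGB, DU = BᴴGV, and G = VᴴGV. Then the transfer function N(ζ) = A + U(ζI − V)⁻¹B satisfies D·N(ζ) + N(1/conj(ζ))ᴴ·D = 0 for all ζ with ζ ∉ {0}, ζ not an eigenvalue of V, and 1/conj(ζ) not an eigenvalue of V. -/
/-!
With `Q = ζ - V` and `P = (w - V)ᴴ = ζ⁻¹ - Vᴴ` (where `w = 1 / conj ζ`), expanding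
`D N(ζ) + N(w)ᴴ D` and substituting `DA + AᴴD = BᴴGB`, `DU = BᴴGV` and its adjoint
`UᴴD = VᴴGB` leaves `Bᴴ (G + G V Q⁻¹ + P⁻¹ Vᴴ G) B`. The middle factor is
`P⁻¹ (P G Q + P G V + Vᴴ G Q) Q⁻¹`, and `P G Q + P G V + Vᴴ G Q = G - Vᴴ G V = 0`.
-/

open Matrix

namespace Matrix

variable {R m n : Type*} [CommRing R] [DecidableEq n]

theorem conjTranspose_smul_one_sub [StarRing R] (V : Matrix n n R) (w : R) :
    (w • (1 : Matrix n n R) - V)ᴴ = star w • 1 - Vᴴ := by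
  rw [conjTranspose_sub, conjTranspose_smul, conjTranspose_one]

variable [Fintype n]

noncomputable def transferFunction (A : Matrix m m R) (U : Matrix m n R) (B : Matrix n m R)
    (V : Matrix n n R) (ζ : R) : Matrix m m R :=
  A + U * (ζ • 1 - V)⁻¹ * B

theorem isUnit_smul_one_sub_of_notMem_spectrum {V : Matrix n n R} {ζ : R}
    (h : ζ ∉ spectrum R V) : IsUnit (ζ • (1 : Matrix n n R) - V) := by
  rw [← Algebra.algebraMap_eq_smul_one]
  exact spectrum.notMem_iff.mp h

theorem conjTranspose_transferFunction [StarRing R] (A : Matrix m m R) (U : Matrix m n R)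
    (B : Matrix n m R) (V : Matrix n n R) (w : R) :
    (transferFunction A U B V w)ᴴ = transferFunction Aᴴ Bᴴ Uᴴ Vᴴ (star w) := by
  simp only [transferFunction, conjTranspose_add, conjTranspose_mul,
    conjTranspose_nonsing_inv, conjTranspose_smul_one_sub, Matrix.mul_assoc]

theorem smul_one_sub_mul_mul_smul_one_sub_add (G V W : Matrix n n R) (a b : R) :
    (a • 1 - W) * G * (b • 1 - V) + (a • 1 - W) * G * V + W * G * (b • 1 - V) =
      (a * b) • G - W * G * V := by
  simp only [sub_mul, mul_sub, smul_mul_assoc, Matrix.mul_smul, Matrix.one_mul,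
    Matrix.mul_one, smul_smul]
  abel

theorem add_mul_inv_add_inv_mul_eq_zero {G V W : Matrix n n R} {a b : R}
    (hG : W * G * V = G) (hab : a * b = 1) (hP : IsUnit (a • 1 - W))
    (hQ : IsUnit (b • 1 - V)) :
    G + G * V * (b • 1 - V)⁻¹ + (a • 1 - W)⁻¹ * W * G = 0 := by
  set P := a • (1 : Matrix n n R) - W
  set Q := b • (1 : Matrix n n R) - V
  have hPd : IsUnit P.det := (isUnit_iff_isUnit_det P).mp hP
  have hQd : IsUnit Q.det := (isUnit_iff_isUnit_det Q).mp hQ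
  have hconj : G + G * V * Q⁻¹ + P⁻¹ * W * G =
      P⁻¹ * (P * G * Q + P * G * V + W * G * Q) * Q⁻¹ := by
    simp only [Matrix.add_mul, Matrix.mul_add, Matrix.mul_assoc, mul_nonsing_inv Q hQd,
      Matrix.mul_one, nonsing_inv_mul_cancel_left _ _ hPd]
  rw [hconj, smul_one_sub_mul_mul_smul_one_sub_add, hab, one_smul, hG, sub_self,
    Matrix.mul_zero, Matrix.zero_mul]

theorem transferFunction_symplectic [StarRing R] [Fintype m] {A D : Matrix m m R}
    {U : Matrix m n R} {B : Matrix n m R} {V G : Matrix n n R} (hD : Dᴴ = D) (hG : G.IsHermitian)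
    (hDA : D * A + Aᴴ * D = Bᴴ * G * B) (hDU : D * U = Bᴴ * G * V)
    (hGV : G = Vᴴ * G * V) {ζ w : R} (hζw : star w * ζ = 1)
    (hζ : IsUnit (ζ • (1 : Matrix n n R) - V)) (hw : IsUnit (w • (1 : Matrix n n R) - V)) :
    D * transferFunction A U B V ζ + (transferFunction A U B V w)ᴴ * D = 0 := by
  have hUD : Uᴴ * D = Vᴴ * G * B := by
    rw [← hD, ← conjTranspose_mul, hDU, conjTranspose_mul, conjTranspose_mul, hG.eq,
      conjTranspose_conjTranspose, Matrix.mul_assoc]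
  have hP : IsUnit (star w • (1 : Matrix n n R) - Vᴴ) := by
    rw [← conjTranspose_smul_one_sub, isUnit_conjTranspose]
    exact hw
  have hmiddle := add_mul_inv_add_inv_mul_eq_zero hGV.symm hζw hP hζ
  calc D * transferFunction A U B V ζ + (transferFunction A U B V w)ᴴ * D
      = (D * A + Aᴴ * D) + D * U * (ζ • 1 - V)⁻¹ * B
          + Bᴴ * (star w • 1 - Vᴴ)⁻¹ * (Uᴴ * D) := by
        rw [conjTranspose_transferFunction]
        simp only [transferFunction, Matrix.mul_add, Matrix.add_mul, Matrix.mul_assoc]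
        abel
    _ = Bᴴ * (G + G * V * (ζ • 1 - V)⁻¹ + (star w • 1 - Vᴴ)⁻¹ * Vᴴ * G) * B := by
        rw [hDA, hDU, hUD]
        simp only [Matrix.mul_add, Matrix.add_mul, Matrix.mul_assoc]
    _ = 0 := by rw [hmiddle, Matrix.mul_zero, Matrix.zero_mul]

end Matrix

theorem transfer_function_G_symplectic_general {s r : ℕ}
    (A : Matrix (Fin s) (Fin s) ℂ) (U : Matrix (Fin s) (Fin r) ℂ)
    (B : Matrix (Fin r) (Fin s) ℂ) (V : Matrix (Fin r) (Fin r) ℂ)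
    (d : Fin s → ℝ)
    (D : Matrix (Fin s) (Fin s) ℂ)
    (hD : D = Matrix.diagonal (fun i => (d i : ℂ)))
    (G : Matrix (Fin r) (Fin r) ℂ) (hG : G.IsHermitian)
    (hDA : D * A + Aᴴ * D = Bᴴ * G * B)
    (hDU : D * U = Bᴴ * G * V)
    (hGV : G = Vᴴ * G * V) :
    ∀ ζ : ℂ, ζ ≠ 0 → ζ ∉ spectrum ℂ V → (starRingEnd ℂ ζ)⁻¹ ∉ spectrum ℂ V →
      D * (A + U * (ζ • (1 : Matrix (Fin r) (Fin r) ℂ) - V)⁻¹ * B) +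
        (A + U * ((starRingEnd ℂ ζ)⁻¹ • (1 : Matrix (Fin r) (Fin r) ℂ) - V)⁻¹ * B)ᴴ * D
        = 0 := by
  intro ζ hζ hζV hwV
  have hDH : Dᴴ = D := by
    rw [hD, diagonal_conjTranspose]
    simp only [Pi.star_def, Complex.star_def, Complex.conj_ofReal]
  have hζw : star (starRingEnd ℂ ζ)⁻¹ * ζ = 1 := by
    rw [star_inv₀, Complex.star_def, Complex.conj_conj, inv_mul_cancel₀ hζ]
  exact transferFunction_symplectic hDH hG hDA hDU hGV hζw
    (isUnit_smul_one_sub_of_notMem_spectrum hζV) (isUnit_smul_one_sub_of_notMem_spectrum hwV)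

/-- For a G-symplectic general linear method (with real invertible diagonal
`D` and Hermitian `G` satisfying `DA + AᴴD = BᴴGB`, `DU = BᴴGV`, `G = VᴴGV`), the
transfer function `N(ζ) = A + U(ζI − V)⁻¹B` satisfies `D·N(ζ) + N(1/conj ζ)ᴴ·D = 0`. -/
theorem transfer_function_G_symplectic {s r : ℕ}
    (A : Matrix (Fin s) (Fin s) ℂ) (U : Matrix (Fin s) (Fin r) ℂ)
    (B : Matrix (Fin r) (Fin s) ℂ) (V : Matrix (Fin r) (Fin r) ℂ)
    (hV : IsUnit V)
    (d : Fin s → ℝ) (hd : ∀ i, d i ≠ 0)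
    (D : Matrix (Fin s) (Fin s) ℂ)
    (hD : D = Matrix.diagonal (fun i => (d i : ℂ)))
    (G : Matrix (Fin r) (Fin r) ℂ) (hG : G.IsHermitian)
    (hDA : D * A + Aᴴ * D = Bᴴ * G * B)
    (hDU : D * U = Bᴴ * G * V)
    (hGV : G = Vᴴ * G * V) :
    ∀ ζ : ℂ, ζ ≠ 0 → ζ ∉ spectrum ℂ V → (starRingEnd ℂ ζ)⁻¹ ∉ spectrum ℂ V →
      D * (A + U * (ζ • (1 : Matrix (Fin r) (Fin r) ℂ) - V)⁻¹ * B) +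
        (A + U * ((starRingEnd ℂ ζ)⁻¹ • (1 : Matrix (Fin r) (Fin r) ℂ) - V)⁻¹ * B)ᴴ * D
        = 0 :=
  transfer_function_G_symplectic_general A U B V d D hD G hG hDA hDU hGV
end

section
/- The 5×5 tableau of method 4123A, given by A = [[1/6,0,0],[1/6,1/6,0],[1/3,2/3,1/6]], U = [[1,−1/3],[1,1/3],[1,−1/3]], B = [[1/4,1/2,1/4],[1/4,1/2,1/4]], V = [[1,0],[0,−1]], satisfies the (L,P)-symmetry conditions with L = diag(1,−1) and P the order-reversing 3×3 permutation: A + PAP = UV⁻¹B, PU = ULV, BP = VLB, L = VLV; and it is parasitism-free: (BU)₂₂ = 0. -/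
open Matrix

/-- The tableau of method 4123A is (L,P)-symmetric with
`L = diag(1,−1)` and `P` the order-reversing 3×3 permutation, and parasitism-free. -/
theorem method_4123A_symmetric_parasitism_free :
    let A : Matrix (Fin 3) (Fin 3) ℂ := !![1/6, 0, 0; 1/6, 1/6, 0; 1/3, 2/3, 1/6]
    let U : Matrix (Fin 3) (Fin 2) ℂ := !![1, -1/3; 1, 1/3; 1, -1/3]
    let B : Matrix (Fin 2) (Fin 3) ℂ := !![1/4, 1/2, 1/4; 1/4, 1/2, 1/4]
    let V : Matrix (Fin 2) (Fin 2) ℂ := !![1, 0; 0, -1]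
    let L : Matrix (Fin 2) (Fin 2) ℂ := !![1, 0; 0, -1]
    let P : Matrix (Fin 3) (Fin 3) ℂ := !![0, 0, 1; 0, 1, 0; 1, 0, 0]
    A + P * A * P = U * V⁻¹ * B ∧
    P * U = U * L * V ∧
    B * P = V * L * B ∧
    L = V * L * V ∧
    (B * U) 1 1 = 0 := by
  intro A U B V L P
  have hV_involutive : V * V = 1 := by
    ext i j
    fin_cases i <;> fin_cases j <;> simp [V, mul_apply, Fin.sum_univ_two]
  rw [inv_eq_left_inv hV_involutive]
  refine ⟨?_, ?_, ?_, ?_, ?_⟩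
  iterate 4
    ext i j
    fin_cases i <;> fin_cases j <;>
      simp [A, U, B, V, L, P, mul_apply, Fin.sum_univ_two, Fin.sum_univ_three] <;> norm_num
  simp [B, U, mul_apply, Fin.sum_univ_three]
  norm_num
end

section
/- Let (A,U,B,V) be an (L,P)-symmetric general linear method with r = 2, s = 3, V = diag(1,−1), L = diag(1,1) = I, and P the order-reversing permutation of 3 elements. Suppose the method is preconsistent (Ue₁ = 𝟙) and write B = [[b₁,b₂,b₃],[β₁,β₂,β₃]], U = [[1,u₁],[1,u₂],[1,u₃]]. Then the symmetry conditions BP = VLB and PU = ULV force β₂ = 0, β₃ = −β₁, u₂ = 0, and u₃ = −u₁, and consequently the parasitism growth factor (BU)₂₂ = −2β₁u₁ can only vanish if β₁ = 0 or u₁ = 0. -/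
/-!
Conjugating by the reversal matrix `P` reverses the columns of `B` and the rows of `U`, so with
`L = I` and `V = diag(1, -1)` the symmetry conditions say that the second row `β` of `B` and the
second column `u` of `U` are odd under `j ↦ 2 - j`. An odd vector of length three has vanishing
middle entry, and the product of two odd vectors is even, so `(BU)₂₂ = β ⬝ᵥ u = 2 β₁u₁`.
-/

open Matrix Equiv

variable {R : Type*}

lemma antidiag_eq_permMatrix_revPerm [Zero R] [One R] :
    !![0, 0, 1; 0, 1, 0; 1, 0, 0] = (Fin.revPerm : Perm (Fin 3)).permMatrix R := by
  ext i j
  fin_cases i <;> fin_cases j <;> simp [PEquiv.toMatrix_apply]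

section Reversal

variable [NonAssocSemiring R] {l n : Type*} {m : ℕ}

lemma mul_permMatrix_revPerm_apply (B : Matrix l (Fin m) R) (i : l) (j : Fin m) :
    (B * (Fin.revPerm : Perm (Fin m)).permMatrix R) i j = B i j.rev := by
  simp [PEquiv.mul_toMatrix_toPEquiv]

lemma permMatrix_revPerm_mul_apply (U : Matrix (Fin m) n R) (i : Fin m) (j : n) :
    ((Fin.revPerm : Perm (Fin m)).permMatrix R * U) i j = U i.rev j := by
  simp [PEquiv.toMatrix_toPEquiv_mul]

end Reversal

section OddVectors

variable [NonAssocRing R] [NoZeroDivisors R] [CharZero R] {f g : Fin 3 → R}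

lemma Fin.apply_one_eq_zero_of_apply_rev_eq_neg (hf : ∀ j, f j.rev = -f j) : f 1 = 0 :=
  CharZero.eq_neg_self_iff.mp (hf 1)

lemma Fin.dotProduct_eq_of_apply_rev_eq_neg (hf : ∀ j, f j.rev = -f j)
    (hg : ∀ j, g j.rev = -g j) : f ⬝ᵥ g = 2 * (f 0 * g 0) := by
  have hf2 : f 2 = -f 0 := hf 0
  have hg2 : g 2 = -g 0 := hg 0
  simp only [dotProduct, Fin.sum_univ_three, Fin.apply_one_eq_zero_of_apply_rev_eq_neg hf,
    hf2, hg2]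
  noncomm_ring

end OddVectors

section Symmetry

variable [Ring R] {m : ℕ}

lemma row_one_apply_rev_of_mul_revPerm (B : Matrix (Fin 2) (Fin m) R)
    (hBP : B * (Fin.revPerm : Perm (Fin m)).permMatrix R = !![(1 : R), 0; 0, -1] * B)
    (j : Fin m) : B 1 j.rev = -B 1 j := by
  rw [← mul_permMatrix_revPerm_apply B, hBP]
  simp [Matrix.mul_apply]

lemma col_one_apply_rev_of_revPerm_mul (U : Matrix (Fin m) (Fin 2) R)
    (hPU : (Fin.revPerm : Perm (Fin m)).permMatrix R * U = U * !![(1 : R), 0; 0, -1])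
    (i : Fin m) : U i.rev 1 = -U i 1 := by
  rw [← permMatrix_revPerm_mul_apply U, hPU]
  simp [Matrix.mul_apply]

end Symmetry

theorem rs23_L_identity_obstruction_general
    (B : Matrix (Fin 2) (Fin 3) ℂ) (U : Matrix (Fin 3) (Fin 2) ℂ)
    (V : Matrix (Fin 2) (Fin 2) ℂ) (hV : V = !![1, 0; 0, -1])
    (L : Matrix (Fin 2) (Fin 2) ℂ) (hL : L = 1)
    (P : Matrix (Fin 3) (Fin 3) ℂ) (hP : P = !![0, 0, 1; 0, 1, 0; 1, 0, 0])
    (hBP : B * P = V * L * B)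
    (hPU : P * U = U * L * V) :
    B 1 1 = 0 ∧ B 1 2 = -B 1 0 ∧ U 1 1 = 0 ∧ U 2 1 = -U 0 1 ∧
    (B * U) 1 1 = 2 * (B 1 0 * U 0 1) ∧
    ((B * U) 1 1 = 0 → B 1 0 = 0 ∨ U 0 1 = 0) := by
  subst hV hL hP
  rw [Matrix.mul_one, antidiag_eq_permMatrix_revPerm] at hBP hPU
  have hβ := row_one_apply_rev_of_mul_revPerm B hBP
  have hu := col_one_apply_rev_of_revPerm_mul U hPU
  have hBU : (B * U) 1 1 = 2 * (B 1 0 * U 0 1) := by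
    rw [Matrix.mul_apply']
    exact Fin.dotProduct_eq_of_apply_rev_eq_neg hβ (fun i => hu i)
  refine ⟨Fin.apply_one_eq_zero_of_apply_rev_eq_neg hβ, hβ 0,
    Fin.apply_one_eq_zero_of_apply_rev_eq_neg (f := fun i => U i 1) hu, hu 0, hBU, fun h => ?_⟩
  rw [hBU] at h
  exact mul_eq_zero.mp ((mul_eq_zero.mp h).resolve_left two_ne_zero)

/-- For an rs = 23 method with `V = diag(1,−1)`, `L = I`, and `P` the
order-reversing permutation, preconsistency (`Ue₁ = 𝟙`) and the symmetry conditions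
`BP = VLB`, `PU = ULV` force `β₂ = 0`, `β₃ = −β₁`, `u₂ = 0`, `u₃ = −u₁`; the
parasitism growth factor `(BU)₂₂ = β₁u₁ + β₂u₂ + β₃u₃` reduces to a multiple of
`β₁u₁` and can vanish only if `β₁ = 0` or `u₁ = 0`. -/
theorem rs23_L_identity_obstruction
    (B : Matrix (Fin 2) (Fin 3) ℂ) (U : Matrix (Fin 3) (Fin 2) ℂ)
    (V : Matrix (Fin 2) (Fin 2) ℂ) (hV : V = !![1, 0; 0, -1])
    (L : Matrix (Fin 2) (Fin 2) ℂ) (hL : L = 1)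
    (P : Matrix (Fin 3) (Fin 3) ℂ) (hP : P = !![0, 0, 1; 0, 1, 0; 1, 0, 0])
    (hpre : ∀ i : Fin 3, U i 0 = 1)
    (hBP : B * P = V * L * B)
    (hPU : P * U = U * L * V) :
    B 1 1 = 0 ∧ B 1 2 = -B 1 0 ∧ U 1 1 = 0 ∧ U 2 1 = -U 0 1 ∧
    (B * U) 1 1 = 2 * (B 1 0 * U 0 1) ∧
    ((B * U) 1 1 = 0 → B 1 0 = 0 ∨ U 0 1 = 0) :=
  rs23_L_identity_obstruction_general B U V hV L hL P hP hBP hPU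
end
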